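/- arXiv:2208.14666 — 3 statements merged into one kernel-verified Lean document; each statement's English description precedes it below -/
import Mathlib

section
/- Assume A ≠ 0 and let τ be a real number with 0 < τ ≤ 1/(2·λmax(AᴴA)). If x* ∈ S is a global minimizer of f over the block sparse set S, then x* is a τ-stationary point; that is, for every block i, the restriction of x* to B_i is a projection of the restriction of x* − τ·∇f(x*) to B_i onto the set of vectors on B_i with at most s_i nonzero entries. -/
open Matrix

/-- The (Wirtinger) gradient of `f(x) = ‖Ax - y‖²`, namely `∇f(x) = Aᴴ(Ax - y)`. -/
noncomputable def gradf {m n : ℕ} (A : Matrix (Fin m) (Fin n) ℂ) (y : Fin m → ℂ)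
    (x : Fin n → ℂ) : Fin n → ℂ :=
  Aᴴ.mulVec (A.mulVec x - y)

/-- The Euclidean norm on `ℂᵏ`. -/
noncomputable def euclNorm {k : ℕ} (v : Fin k → ℂ) : ℝ :=
  Real.sqrt (∑ i, ‖v i‖ ^ 2)

/-- The objective `f(x) = ‖Ax - y‖²` (squared Euclidean norm). -/
noncomputable def fObj {m n : ℕ} (A : Matrix (Fin m) (Fin n) ℂ) (y : Fin m → ℂ)
    (x : Fin n → ℂ) : ℝ :=
  euclNorm (A.mulVec x - y) ^ 2

/-- The largest eigenvalue of the Hermitian matrix `AᴴA`. -/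
noncomputable def lamMax {m n : ℕ} (A : Matrix (Fin m) (Fin n) ℂ) : ℝ :=
  ⨆ i, (Matrix.isHermitian_conjTranspose_mul_self A).eigenvalues i

open Classical in
/-- `‖x_[B]‖₀`: the number of nonzero entries of `x` on the index set `B`. -/
noncomputable def blockL0 {n : ℕ} (B : Finset (Fin n)) (x : Fin n → ℂ) : ℕ :=
  (B.filter fun j => x j ≠ 0).card

/-- `v` (restricted to `B`) is a projection of `u` (restricted to `B`) onto the set of
vectors on `B` with at most `s` nonzero entries: `v` is `s`-sparse on `B` and its Euclidean
distance to `u` on `B` is no larger than that of any `s`-sparse (on `B`) vector `w`. -/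
noncomputable def IsBlockProj {n : ℕ} (B : Finset (Fin n)) (s : ℕ)
    (v u : Fin n → ℂ) : Prop :=
  blockL0 B v ≤ s ∧
    ∀ w : Fin n → ℂ, blockL0 B w ≤ s →
      Real.sqrt (∑ j ∈ B, ‖v j - u j‖ ^ 2) ≤ Real.sqrt (∑ j ∈ B, ‖w j - u j‖ ^ 2)

/-!
Perturb the minimizer `x*` on one block only: replace `x*_[i]` by an `s_i`-sparse `w` and call
the difference `h`, which is supported on `B_i`. The perturbed point is still in `S`, so by
minimality and the descent lemma `f(x* + h) ≤ f(x*) + 2 Re⟨h, ∇f(x*)⟩ + λmax ‖h‖²` we get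
`0 ≤ 2 Re⟨h, ∇f(x*)⟩ + λmax ‖h‖²`. Multiplying by `τ` and using `τ λmax ≤ 1/2` gives
`‖h + τ∇f(x*)‖² - ‖τ∇f(x*)‖² = ‖h‖² + 2τ Re⟨h, ∇f(x*)⟩ ≥ ‖h‖² / 2 ≥ 0` on the block,
which is the projection inequality for `w`.
-/

open scoped MatrixOrder

namespace Matrix

variable {ι 𝕜 : Type*} [Fintype ι] [RCLike 𝕜]

lemma re_star_dotProduct_self (v : ι → 𝕜) : RCLike.re (star v ⬝ᵥ v) = ∑ i, ‖v i‖ ^ 2 := by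
  simp only [dotProduct, Pi.star_apply, RCLike.star_def, RCLike.conj_mul, map_sum]
  norm_cast

lemma IsHermitian.le_algebraMap_of_eigenvalues_le [DecidableEq ι] {M : Matrix ι ι 𝕜}
    (hM : M.IsHermitian) {c : ℝ} (hc : ∀ i, hM.eigenvalues i ≤ c) :
    M ≤ algebraMap ℝ (Matrix ι ι 𝕜) c := by
  refine le_algebraMap_of_spectrum_le (fun x hx => ?_) hM.isSelfAdjoint
  obtain ⟨i, rfl⟩ := hM.spectrum_real_eq_range_eigenvalues ▸ hx
  exact hc i

lemma re_dotProduct_mulVec_le_of_le_algebraMap [DecidableEq ι] {M : Matrix ι ι 𝕜} {c : ℝ}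
    (h : M ≤ algebraMap ℝ (Matrix ι ι 𝕜) c) (x : ι → 𝕜) :
    RCLike.re (star x ⬝ᵥ M *ᵥ x) ≤ c * RCLike.re (star x ⬝ᵥ x) := by
  have := (le_iff.mp h).re_dotProduct_nonneg x
  rw [Algebra.algebraMap_eq_smul_one, sub_mulVec, dotProduct_sub, smul_mulVec, one_mulVec,
    dotProduct_smul, map_sub, RCLike.smul_re] at this
  linarith

lemma sum_norm_add_sq_of_support_subset {B : Finset ι} {h b : ι → 𝕜}
    (hh : ∀ j ∉ B, h j = 0) :
    ∑ j ∈ B, ‖h j + b j‖ ^ 2 =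
      RCLike.re (star h ⬝ᵥ h) + 2 * RCLike.re (star h ⬝ᵥ b) + ∑ j ∈ B, ‖b j‖ ^ 2 := by
  have hB : ∀ f : ι → ℝ, (∀ j ∉ B, f j = 0) → ∑ j ∈ B, f j = ∑ j, f j := fun f hf =>
    Finset.sum_subset (Finset.subset_univ B) fun j _ hj => hf j hj
  rw [re_star_dotProduct_self, ← hB _ fun j hj => by simp [hh j hj], dotProduct, map_sum,
    ← hB _ fun j hj => by simp [hh j hj], Finset.mul_sum, ← Finset.sum_add_distrib,
    ← Finset.sum_add_distrib]
  refine Finset.sum_congr rfl fun j _ => ?_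
  rw [norm_add_sq (𝕜 := 𝕜), RCLike.inner_apply, mul_comm (b j)]
  rfl

lemma sum_norm_ofReal_mul_sq_le_of_descent {B : Finset ι} {h g : ι → 𝕜} {τ L : ℝ}
    (hh : ∀ j ∉ B, h j = 0) (hτ : 0 < τ) (hτL : τ * L ≤ 1 / 2)
    (hdesc : 0 ≤ 2 * RCLike.re (star h ⬝ᵥ g) + L * RCLike.re (star h ⬝ᵥ h)) :
    ∑ j ∈ B, ‖(τ : 𝕜) * g j‖ ^ 2 ≤ ∑ j ∈ B, ‖h j + (τ : 𝕜) * g j‖ ^ 2 := by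
  have hmul : RCLike.re (star h ⬝ᵥ fun j => (τ : 𝕜) * g j) = τ * RCLike.re (star h ⬝ᵥ g) := by
    rw [show (fun j => (τ : 𝕜) * g j) = (τ : 𝕜) • g from rfl, dotProduct_smul, smul_eq_mul,
      RCLike.re_ofReal_mul]
  have hnorm : 0 ≤ RCLike.re (star h ⬝ᵥ h) := by
    rw [re_star_dotProduct_self]
    positivity
  rw [sum_norm_add_sq_of_support_subset hh, hmul]
  nlinarith [mul_nonneg hτ.le hdesc, mul_le_mul_of_nonneg_right hτL hnorm]

end Matrix

lemma re_star_mulVec_dotProduct_mulVec_le_lamMax {m n : ℕ} (A : Matrix (Fin m) (Fin n) ℂ)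
    (h : Fin n → ℂ) : (star (A *ᵥ h) ⬝ᵥ A *ᵥ h).re ≤ lamMax A * (star h ⬝ᵥ h).re := by
  have hM := isHermitian_conjTranspose_mul_self A
  rw [star_mulVec, ← dotProduct_mulVec, mulVec_mulVec]
  refine re_dotProduct_mulVec_le_of_le_algebraMap
    (hM.le_algebraMap_of_eigenvalues_le fun i => ?_) h
  exact le_ciSup (Set.finite_range _).bddAbove i

lemma fObj_eq_re_dotProduct {m n : ℕ} (A : Matrix (Fin m) (Fin n) ℂ) (y : Fin m → ℂ)
    (x : Fin n → ℂ) : fObj A y x = (star (A *ᵥ x - y) ⬝ᵥ (A *ᵥ x - y)).re := by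
  rw [fObj, euclNorm, Real.sq_sqrt (by positivity)]
  exact (re_star_dotProduct_self _).symm

lemma fObj_add {m n : ℕ} (A : Matrix (Fin m) (Fin n) ℂ) (y : Fin m → ℂ) (x h : Fin n → ℂ) :
    fObj A y (x + h) =
      fObj A y x + 2 * (star h ⬝ᵥ gradf A y x).re + (star (A *ᵥ h) ⬝ᵥ A *ᵥ h).re := by
  set r := A *ᵥ x - y
  have hcross : star (A *ᵥ h) ⬝ᵥ r = star h ⬝ᵥ gradf A y x := by
    rw [gradf, star_mulVec, dotProduct_mulVec]
  have hsplit : A *ᵥ (x + h) - y = r + A *ᵥ h := by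
    rw [mulVec_add, add_sub_right_comm]
  rw [fObj_eq_re_dotProduct, fObj_eq_re_dotProduct, hsplit, star_add, add_dotProduct,
    dotProduct_add, dotProduct_add, star_dotProduct r (A *ᵥ h), hcross]
  simp only [Complex.add_re, Complex.star_def, Complex.conj_re]
  ring

lemma fObj_add_le {m n : ℕ} (A : Matrix (Fin m) (Fin n) ℂ) (y : Fin m → ℂ) (x h : Fin n → ℂ) :
    fObj A y (x + h) ≤
      fObj A y x + 2 * (star h ⬝ᵥ gradf A y x).re + lamMax A * (star h ⬝ᵥ h).re := by
  rw [fObj_add]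
  linarith [re_star_mulVec_dotProduct_mulVec_le_lamMax A h]

lemma blockL0_congr {n : ℕ} {B : Finset (Fin n)} {x z : Fin n → ℂ} (h : ∀ j ∈ B, x j = z j) :
    blockL0 B x = blockL0 B z := by
  unfold blockL0
  rw [Finset.filter_congr fun j hj => by rw [h j hj]]

theorem minimizer_is_tau_stationary_general (m n I : ℕ) (A : Matrix (Fin m) (Fin n) ℂ)
    (y : Fin m → ℂ) (B : Fin I → Finset (Fin n))
    (hdisj : ∀ i i', i ≠ i' → Disjoint (B i) (B i'))
    (s : Fin I → ℕ) (τ : ℝ) (hτpos : 0 < τ) (hτle : τ ≤ 1 / (2 * lamMax A))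
    (xstar : Fin n → ℂ)
    (hfeas : ∀ i, blockL0 (B i) xstar ≤ s i)
    (hmin : ∀ x : Fin n → ℂ, (∀ i, blockL0 (B i) x ≤ s i) → fObj A y xstar ≤ fObj A y x) :
    ∀ i, IsBlockProj (B i) (s i) xstar
      (fun j => xstar j - (τ : ℂ) * gradf A y xstar j) := by
  classical
  intro i
  refine ⟨hfeas i, fun w hw => Real.sqrt_le_sqrt ?_⟩
  set g := gradf A y xstar
  set h : Fin n → ℂ := fun j => if j ∈ B i then w j - xstar j else 0 with h_def
  have hsupp : ∀ j ∉ B i, h j = 0 := fun j hj => if_neg hj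
  have hfeas' : ∀ i', blockL0 (B i') (xstar + h) ≤ s i' := by
    intro i'
    rcases eq_or_ne i' i with rfl | hi
    · rwa [blockL0_congr (z := w) fun j hj => by simp [h_def, hj]]
    · rw [blockL0_congr (z := xstar) fun j hj => by
        simp [hsupp j (Finset.disjoint_left.mp (hdisj i' i hi) hj)]]
      exact hfeas i'
  have hdesc : 0 ≤ 2 * (star h ⬝ᵥ g).re + lamMax A * (star h ⬝ᵥ h).re := by
    linarith [(hmin _ hfeas').trans (fObj_add_le A y xstar h)]
  have hτL : τ * lamMax A ≤ 1 / 2 := by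
    rcases le_or_gt (lamMax A) 0 with hL | hL
    · nlinarith
    · have := (le_div_iff₀ (by positivity)).mp hτle
      linarith
  calc ∑ j ∈ B i, ‖xstar j - (xstar j - τ * g j)‖ ^ 2 = ∑ j ∈ B i, ‖(τ : ℂ) * g j‖ ^ 2 := by
        simp_rw [sub_sub_cancel]
    _ ≤ ∑ j ∈ B i, ‖h j + τ * g j‖ ^ 2 :=
        sum_norm_ofReal_mul_sq_le_of_descent hsupp hτpos hτL hdesc
    _ = ∑ j ∈ B i, ‖w j - (xstar j - τ * g j)‖ ^ 2 :=
        Finset.sum_congr rfl fun j hj => by simp only [h_def, if_pos hj, sub_add]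

/-- If `A ≠ 0` and `0 < τ ≤ 1/(2·λmax(AᴴA))`, then any global minimizer `x*` of
`f` over the block sparse set `S` is a `τ`-stationary point: for each block `B i`, the
restriction of `x*` to `B i` is a projection of the restriction of `x* − τ·∇f(x*)` to `B i`
onto the set of vectors on `B i` with at most `s i` nonzero entries. -/
theorem minimizer_is_tau_stationary (m n I : ℕ) (A : Matrix (Fin m) (Fin n) ℂ)
    (y : Fin m → ℂ) (B : Fin I → Finset (Fin n))
    (hdisj : ∀ i i', i ≠ i' → Disjoint (B i) (B i'))
    (hne : ∀ i, (B i).Nonempty)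
    (hcover : ∀ j, ∃ i, j ∈ B i)
    (s : Fin I → ℕ) (hspos : ∀ i, 0 < s i) (hsle : ∀ i, s i ≤ (B i).card)
    (hA : A ≠ 0) (τ : ℝ) (hτpos : 0 < τ) (hτle : τ ≤ 1 / (2 * lamMax A))
    (xstar : Fin n → ℂ)
    (hfeas : ∀ i, blockL0 (B i) xstar ≤ s i)
    (hmin : ∀ x : Fin n → ℂ, (∀ i, blockL0 (B i) x ≤ s i) → fObj A y xstar ≤ fObj A y x) :
    ∀ i, IsBlockProj (B i) (s i) xstar
      (fun j => xstar j - (τ : ℂ) * gradf A y xstar j) :=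
  minimizer_is_tau_stationary_general m n I A y B hdisj s τ hτpos hτle xstar hfeas hmin
end

section
/- Let τ > 0 and x* ∈ S. Then x* is a τ-stationary point (for every block i, the restriction of x* to B_i is a projection of the restriction of x* − τ·∇f(x*) to B_i onto the set of vectors on B_i with at most s_i nonzero entries) if and only if for every block i the following hold: (i) if ‖x*_[i]‖₀ = s_i, then ∇f(x*)_j = 0 for every j ∈ B_i with x*_j ≠ 0, and |∇f(x*)_j| ≤ M_{s_i}(|x*_[i]|)/τ for every j ∈ B_i with x*_j = 0; (ii) if ‖x*_[i]‖₀ < s_i, then ∇f(x*)_j = 0 for every j ∈ B_i. -/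
/-!
On a block `B`, put `u = x - τ ∇f(x)`. A best `s`-sparse approximation of `u` on `B` keeps `s`
entries of `u` of largest modulus and zeroes the rest. So `x` is one iff it agrees with `u` on its
support and either the support is full and no entry of `u` off it exceeds the smallest modulus
`M_s(|x_B|)` kept on it, or the support is not full and `u = x` on all of `B`. Necessity follows
by comparing `x` with its one- and two-coordinate modifications; sufficiency by an exchange
argument on the mass `∑_{j ∈ B \ supp w} |u_j|²` that a competitor `w` discards.
-/

open Matrix

/-- `M_s(|x_[B]|)`: the `s`-th largest value among the moduli of the entries of `x` on `B`
(obtained as the entry at position `length - s` of the increasingly sorted list of moduli). -/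
noncomputable def Mth {n : ℕ} (B : Finset (Fin n)) (s : ℕ) (x : Fin n → ℂ) : ℝ :=
  let l := Multiset.sort (B.val.map fun j => ‖x j‖) (· ≤ ·)
  l.getD (l.length - s) 0

lemma List.Pairwise.getElem_iff_length_sub_countP_le {α : Type*} [Preorder α]
    {p : α → Prop} [DecidablePred p] (hp : Monotone p) {L : List α}
    (hL : L.Pairwise (· ≤ ·)) {k : ℕ} (hk : k < L.length) :
    p L[k] ↔ L.length - L.countP (p ·) ≤ k := by
  induction L generalizing k with
  | nil => simp at hk
  | cons a L ih =>
    rw [List.pairwise_cons] at hL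
    have hall : p a → L.countP (p ·) = L.length := fun ha =>
      List.countP_eq_length.2 fun b hb => by simpa using hp (hL.1 b hb) ha
    have hle := L.countP_le_length (p := (p ·))
    have hcons : (a :: L).countP (p ·) = L.countP (p ·) + if p a then 1 else 0 := by
      simp [List.countP_cons]
    rw [List.length_cons, hcons]
    cases k with
    | zero =>
      rw [List.getElem_cons_zero]
      by_cases ha : p a
      · simp [ha, hall ha]
      · simp only [ha, if_false, add_zero, false_iff, not_le]; omega
    | succ k =>
      rw [List.getElem_cons_succ, ih hL.2 (by simpa using hk)]
      by_cases ha : p a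
      · simp only [ha, if_true, hall ha]; omega
      · simp only [ha, if_false]; omega

lemma Finset.sum_le_sum_of_card_le_of_le_of_le {ι : Type*} [DecidableEq ι] {S T : Finset ι}
    {f : ι → ℝ} {M : ℝ} (hM : 0 ≤ M) (hcard : T.card ≤ S.card) (hT : ∀ j ∈ T \ S, f j ≤ M)
    (hS : ∀ j ∈ S \ T, M ≤ f j) : ∑ j ∈ T, f j ≤ ∑ j ∈ S, f j := by
  rw [← Finset.sum_inter_add_sum_sdiff T S, ← Finset.sum_inter_add_sum_sdiff S T,
    Finset.inter_comm]
  gcongr _ + ?_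
  have hcard' : ((T \ S).card : ℝ) ≤ (S \ T).card := by
    exact_mod_cast Finset.card_sdiff_le_card_sdiff_iff.2 hcard
  calc ∑ j ∈ T \ S, f j ≤ (T \ S).card * M := by
        simpa using Finset.sum_le_card_nsmul _ _ _ hT
    _ ≤ (S \ T).card * M := by gcongr
    _ ≤ ∑ j ∈ S \ T, f j := by simpa using Finset.card_nsmul_le_sum _ _ _ hS

section

variable {n : ℕ} {B : Finset (Fin n)} {s : ℕ}

lemma isLeast_Mth {x : Fin n → ℂ} (hs : 0 < s) (hx : blockL0 B x = s) :
    IsLeast {r | ∃ j ∈ B, x j ≠ 0 ∧ ‖x j‖ = r} (Mth B s x) := by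
  set L := Multiset.sort (B.val.map fun j => ‖x j‖) (· ≤ ·)
  have hL : (L : Multiset ℝ) = B.val.map fun j => ‖x j‖ := Multiset.sort_eq _ _
  have hmem : ∀ r, r ∈ L ↔ ∃ j ∈ B, ‖x j‖ = r := fun r => by
    rw [← Multiset.mem_coe, hL]; simp
  have hcount : L.countP (0 < ·) = s := by
    rw [← Multiset.coe_countP, hL, Multiset.countP_map, ← hx, blockL0, Finset.card]
    simp [Finset.filter_val]
  have hsorted : L.Pairwise (· ≤ ·) := Multiset.pairwise_sort _ _
  have ht : L.length - s < L.length := by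
    have := L.countP_le_length (p := (0 < ·)); omega
  have hpos : ∀ k (hk : k < L.length), 0 < L[k] ↔ L.length - s ≤ k := fun k hk => by
    rw [← hcount]
    exact hsorted.getElem_iff_length_sub_countP_le (fun a b hab ha => ha.trans_le hab) hk
  rw [show Mth B s x = L[L.length - s] from List.getD_eq_getElem _ _ ht]
  constructor
  · obtain ⟨j, hj, hjt⟩ := (hmem _).1 (List.getElem_mem ht)
    exact ⟨j, hj, norm_pos_iff.1 (hjt ▸ (hpos _ ht).2 le_rfl), hjt⟩
  · rintro _ ⟨j, hj, hxj, rfl⟩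
    obtain ⟨k, hk, hkj⟩ := List.getElem_of_mem ((hmem _).2 ⟨j, hj, rfl⟩)
    rw [← hkj]
    exact hsorted.rel_get_of_le (a := ⟨_, ht⟩) (b := ⟨k, hk⟩)
      ((hpos k hk).1 (hkj ▸ norm_pos_iff.2 hxj))

lemma blockL0_update_le_succ (x : Fin n → ℂ) (j : Fin n) (c : ℂ) :
    blockL0 B (Function.update x j c) ≤ blockL0 B x + 1 := by
  have : {i ∈ B | Function.update x j c i ≠ 0} ⊆ insert j {i ∈ B | x i ≠ 0} := by
    intro i hi
    by_cases hij : i = j <;> simp_all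
  exact (Finset.card_le_card this).trans (Finset.card_insert_le _ _)

lemma blockL0_update_le_of_ne_zero {x : Fin n → ℂ} {j : Fin n} (hxj : x j ≠ 0) (c : ℂ) :
    blockL0 B (Function.update x j c) ≤ blockL0 B x := by
  refine Finset.card_le_card fun i hi => ?_
  by_cases hij : i = j <;> simp_all

lemma blockL0_update_zero_lt {x : Fin n → ℂ} {j : Fin n} (hj : j ∈ B) (hxj : x j ≠ 0) :
    blockL0 B (Function.update x j 0) < blockL0 B x := by
  refine Finset.card_lt_card
    ⟨fun i hi => ?_, fun h => by simpa using h (Finset.mem_filter.2 ⟨hj, hxj⟩)⟩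
  by_cases hij : i = j <;> simp_all

lemma sum_sq_norm_update_sub {x u : Fin n → ℂ} {j : Fin n} (hj : j ∈ B) (c : ℂ) :
    ∑ i ∈ B, ‖Function.update x j c i - u i‖ ^ 2
      = ∑ i ∈ B, ‖x i - u i‖ ^ 2 - ‖x j - u j‖ ^ 2 + ‖c - u j‖ ^ 2 := by
  rw [← Finset.add_sum_erase _ _ hj, ← Finset.add_sum_erase _ _ hj,
    Finset.sum_congr rfl fun i hi => by rw [Function.update_of_ne (Finset.ne_of_mem_erase hi)]]
  simp only [Function.update_self]
  ring

lemma isBlockProj_iff_sum_le {x u : Fin n → ℂ} :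
    IsBlockProj B s x u ↔ blockL0 B x ≤ s ∧ ∀ w : Fin n → ℂ, blockL0 B w ≤ s →
      ∑ j ∈ B, ‖x j - u j‖ ^ 2 ≤ ∑ j ∈ B, ‖w j - u j‖ ^ 2 := by
  refine and_congr_right fun _ => forall₂_congr fun w _ => Real.sqrt_le_sqrt_iff ?_
  positivity

namespace IsBlockProj

variable {x u : Fin n → ℂ}

lemma eq_of_blockL0_update_le (hP : IsBlockProj B s x u) {j : Fin n} (hj : j ∈ B)
    (hupd : blockL0 B (Function.update x j (u j)) ≤ s) : x j = u j := by
  have h := isBlockProj_iff_sum_le.1 hP |>.2 _ hupd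
  rw [sum_sq_norm_update_sub hj, sub_self, norm_zero] at h
  have : ‖x j - u j‖ ^ 2 ≤ 0 := by linarith
  simpa [sub_eq_zero] using this

lemma eq_of_ne_zero (hP : IsBlockProj B s x u) {j : Fin n} (hj : j ∈ B) (hxj : x j ≠ 0) :
    x j = u j :=
  hP.eq_of_blockL0_update_le hj ((blockL0_update_le_of_ne_zero hxj _).trans hP.1)

lemma eq_of_blockL0_lt (hP : IsBlockProj B s x u) {j : Fin n} (hj : j ∈ B)
    (hlt : blockL0 B x < s) : x j = u j :=
  hP.eq_of_blockL0_update_le hj ((blockL0_update_le_succ _ _ _).trans hlt)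

lemma norm_le_norm (hP : IsBlockProj B s x u) {j l : Fin n} (hj : j ∈ B) (hxj : x j = 0)
    (hl : l ∈ B) (hxl : x l ≠ 0) : ‖u j‖ ≤ ‖x l‖ := by
  have hjl : j ≠ l := fun h => hxl (h ▸ hxj)
  have hle : blockL0 B (Function.update (Function.update x l 0) j (u j)) ≤ s :=
    (blockL0_update_le_succ _ _ _).trans ((blockL0_update_zero_lt hl hxl).trans_le hP.1)
  have h := isBlockProj_iff_sum_le.1 hP |>.2 _ hle
  rw [sum_sq_norm_update_sub hj, sum_sq_norm_update_sub hl, Function.update_of_ne hjl, hxj,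
    ← hP.eq_of_ne_zero hl hxl] at h
  simp only [sub_self, norm_zero, zero_sub, norm_neg] at h
  exact (pow_le_pow_iff_left₀ (norm_nonneg _) (norm_nonneg _) two_ne_zero).1 (by linarith)

end IsBlockProj

lemma sum_sq_norm_sub_eq (w u : Fin n → ℂ) :
    ∑ j ∈ B, ‖w j - u j‖ ^ 2 = ∑ j ∈ B, ‖u j‖ ^ 2 - ∑ j ∈ {j ∈ B | w j ≠ 0}, ‖u j‖ ^ 2
      + ∑ j ∈ {j ∈ B | w j ≠ 0}, ‖w j - u j‖ ^ 2 := by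
  rw [← Finset.sum_filter_add_sum_filter_not B (fun j => w j ≠ 0),
    ← Finset.sum_filter_add_sum_filter_not B (fun j => w j ≠ 0) (fun j => ‖u j‖ ^ 2)]
  have hoff :
      ∑ j ∈ {j ∈ B | ¬w j ≠ 0}, ‖w j - u j‖ ^ 2 = ∑ j ∈ {j ∈ B | ¬w j ≠ 0}, ‖u j‖ ^ 2 :=
    Finset.sum_congr rfl fun j hj => by simp [not_not.1 (Finset.mem_filter.1 hj).2]
  rw [hoff]
  ring

lemma isBlockProj_iff {x u : Fin n → ℂ} (hs : 0 < s) (hx : blockL0 B x ≤ s) :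
    IsBlockProj B s x u ↔
      (blockL0 B x = s → (∀ j ∈ B, x j ≠ 0 → x j = u j) ∧
          ∀ j ∈ B, x j = 0 → ‖u j‖ ≤ Mth B s x) ∧
        (blockL0 B x < s → ∀ j ∈ B, x j = u j) := by
  constructor
  · intro hP
    refine ⟨fun heq => ⟨fun j hj => hP.eq_of_ne_zero hj, fun j hj hxj => ?_⟩,
      fun hlt j hj => hP.eq_of_blockL0_lt hj hlt⟩
    obtain ⟨l, hl, hxl, hlM⟩ := (isLeast_Mth hs heq).1
    exact hlM ▸ hP.norm_le_norm hj hxj hl hxl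
  rintro ⟨hfull, hsparse⟩
  refine isBlockProj_iff_sum_le.2 ⟨hx, fun w hw => ?_⟩
  rcases hx.lt_or_eq with hlt | heq
  · calc ∑ j ∈ B, ‖x j - u j‖ ^ 2 = 0 :=
          Finset.sum_eq_zero fun j hj => by simp [hsparse hlt j hj]
      _ ≤ _ := by positivity
  obtain ⟨hsupp, hoff⟩ := hfull heq
  obtain ⟨⟨l, -, -, hlM⟩, hmin⟩ := isLeast_Mth hs heq
  have hM : 0 ≤ Mth B s x := hlM ▸ norm_nonneg _
  have hexch : ∑ j ∈ {j ∈ B | w j ≠ 0}, ‖u j‖ ^ 2 ≤ ∑ j ∈ {j ∈ B | x j ≠ 0}, ‖u j‖ ^ 2 := by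
    refine Finset.sum_le_sum_of_card_le_of_le_of_le (pow_nonneg hM 2) (hw.trans heq.ge)
      (fun j hj => ?_) (fun j hj => ?_)
    · simp only [Finset.mem_sdiff, Finset.mem_filter, not_and, not_not] at hj
      exact pow_le_pow_left₀ (norm_nonneg _) (hoff j hj.1.1 (hj.2 hj.1.1)) 2
    · simp only [Finset.mem_sdiff, Finset.mem_filter] at hj
      rw [← hsupp j hj.1.1 hj.1.2]
      exact pow_le_pow_left₀ hM (hmin ⟨j, hj.1.1, hj.1.2, rfl⟩) 2
  have hfit : ∑ j ∈ {j ∈ B | x j ≠ 0}, ‖x j - u j‖ ^ 2 = 0 :=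
    Finset.sum_eq_zero fun j hj => by
      simp [hsupp j (Finset.mem_filter.1 hj).1 (Finset.mem_filter.1 hj).2]
  rw [sum_sq_norm_sub_eq x u, sum_sq_norm_sub_eq w u, hfit]
  have : 0 ≤ ∑ j ∈ {j ∈ B | w j ≠ 0}, ‖w j - u j‖ ^ 2 := by positivity
  linarith

lemma isBlockProj_sub_mul_iff {x g : Fin n → ℂ} {τ : ℝ} (hτ : 0 < τ) (hs : 0 < s)
    (hx : blockL0 B x ≤ s) :
    IsBlockProj B s x (fun j => x j - τ * g j) ↔
      (blockL0 B x = s → (∀ j ∈ B, x j ≠ 0 → g j = 0) ∧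
          ∀ j ∈ B, x j = 0 → ‖g j‖ ≤ Mth B s x / τ) ∧
        (blockL0 B x < s → ∀ j ∈ B, g j = 0) := by
  have hfix : ∀ j, x j = x j - τ * g j ↔ g j = 0 := fun j => by
    rw [eq_comm, sub_eq_self, mul_eq_zero, Complex.ofReal_eq_zero, or_iff_right hτ.ne']
  have hscale : ∀ j, ‖(τ : ℂ) * g j‖ ≤ Mth B s x ↔ ‖g j‖ ≤ Mth B s x / τ := fun j => by
    rw [norm_mul, Complex.norm_real, Real.norm_of_nonneg hτ.le, le_div_iff₀' hτ]
  rw [isBlockProj_iff hs hx]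
  simp +contextual only [hfix, zero_sub, norm_neg, hscale]

end

theorem tau_stationary_characterization_general (m n I : ℕ) (A : Matrix (Fin m) (Fin n) ℂ)
    (y : Fin m → ℂ) (B : Fin I → Finset (Fin n))
    (s : Fin I → ℕ) (hspos : ∀ i, 0 < s i)
    (τ : ℝ) (hτpos : 0 < τ)
    (xstar : Fin n → ℂ)
    (hfeas : ∀ i, blockL0 (B i) xstar ≤ s i) :
    (∀ i, IsBlockProj (B i) (s i) xstar
        (fun j => xstar j - (τ : ℂ) * gradf A y xstar j)) ↔
      (∀ i,
        (blockL0 (B i) xstar = s i →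
          (∀ j ∈ B i, xstar j ≠ 0 → gradf A y xstar j = 0) ∧
          (∀ j ∈ B i, xstar j = 0 →
            ‖gradf A y xstar j‖ ≤ Mth (B i) (s i) xstar / τ)) ∧
        (blockL0 (B i) xstar < s i → ∀ j ∈ B i, gradf A y xstar j = 0)) :=
  forall_congr' fun i => isBlockProj_sub_mul_iff hτpos (hspos i) (hfeas i)

/-- Characterization of `τ`-stationary points: `x* ∈ S` is `τ`-stationary iff for every
block `i`, (i) if `‖x*_[i]‖₀ = s i` then the gradient vanishes on the support of `x*` in
`B i` and is bounded by `M_{s_i}(|x*_[i]|)/τ` off the support; (ii) if `‖x*_[i]‖₀ < s i`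
then the gradient vanishes on all of `B i`. -/
theorem tau_stationary_characterization (m n I : ℕ) (A : Matrix (Fin m) (Fin n) ℂ)
    (y : Fin m → ℂ) (B : Fin I → Finset (Fin n))
    (hdisj : ∀ i i', i ≠ i' → Disjoint (B i) (B i'))
    (hne : ∀ i, (B i).Nonempty)
    (hcover : ∀ j, ∃ i, j ∈ B i)
    (s : Fin I → ℕ) (hspos : ∀ i, 0 < s i) (hsle : ∀ i, s i ≤ (B i).card)
    (τ : ℝ) (hτpos : 0 < τ)
    (xstar : Fin n → ℂ)
    (hfeas : ∀ i, blockL0 (B i) xstar ≤ s i) :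
    (∀ i, IsBlockProj (B i) (s i) xstar
        (fun j => xstar j - (τ : ℂ) * gradf A y xstar j)) ↔
      (∀ i,
        (blockL0 (B i) xstar = s i →
          (∀ j ∈ B i, xstar j ≠ 0 → gradf A y xstar j = 0) ∧
          (∀ j ∈ B i, xstar j = 0 →
            ‖gradf A y xstar j‖ ≤ Mth (B i) (s i) xstar / τ)) ∧
        (blockL0 (B i) xstar < s i → ∀ j ∈ B i, gradf A y xstar j = 0)) :=
  tau_stationary_characterization_general m n I A y B s hspos τ hτpos xstar hfeas
end

section
/- Let x ∈ ℂⁿ and let T ⊆ {1,…,n} be such that the principal submatrix (AᴴA)_{T,T} is invertible. Define the Newton direction d ∈ ℂⁿ by d_{T^c} = −x_{T^c} on the complement of T, and d_T = ((AᴴA)_{T,T})⁻¹ ( (AᴴA)_{T,T^c} x_{T^c} − (Aᴴ(Ax − y))_T ) on T. Then the updated point z = x + d satisfies z_j = 0 for every j ∉ T and (Aᴴ(Az − y))_j = 0 for every j ∈ T; that is, one Newton step exactly solves the stationarity system F_τ(z; T) = 0 consisting of ∇_T f(z) = 0 and z_{T^c} = 0. -/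
open Matrix

/-- One Newton step exactly solves the stationarity system `F_τ(z; T) = 0`:
with `d_{T^c} = −x_{T^c}` and
`d_T = ((AᴴA)_{T,T})⁻¹ ((AᴴA)_{T,T^c} x_{T^c} − (Aᴴ(Ax − y))_T)`, the point `z = x + d`
satisfies `z_j = 0` for all `j ∉ T` and `(Aᴴ(Az − y))_j = 0` for all `j ∈ T`. -/
theorem newton_step_solves_stationarity_system (m n : ℕ)
    (A : Matrix (Fin m) (Fin n) ℂ) (y : Fin m → ℂ)
    (x : Fin n → ℂ) (T : Finset (Fin n))
    (G : Matrix (Fin n) (Fin n) ℂ) (hG : G = Aᴴ * A)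
    (GTT : Matrix {j // j ∈ T} {j // j ∈ T} ℂ)
    (hGTT : GTT = G.submatrix (Subtype.val : {j // j ∈ T} → Fin n) Subtype.val)
    (hinv : IsUnit GTT.det)
    (d : Fin n → ℂ)
    (hdTc : ∀ j ∉ T, d j = -x j)
    (hdT : ∀ j, ∀ hj : j ∈ T,
      d j = GTT⁻¹.mulVec
        (fun a : {j // j ∈ T} =>
          (∑ k ∈ Tᶜ, G a.val k * x k) - Aᴴ.mulVec (A.mulVec x - y) a.val)
        ⟨j, hj⟩)
    (z : Fin n → ℂ) (hz : z = x + d) :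
    (∀ j ∉ T, z j = 0) ∧ (∀ j ∈ T, Aᴴ.mulVec (A.mulVec z - y) j = 0) := by
  subst hz
  have hzero : ∀ j ∉ T, x j + d j = 0 := fun j hj => by rw [hdTc j hj]; ring
  refine ⟨fun j hj => hzero j hj, fun j hj => ?_⟩
  set v : {j // j ∈ T} → ℂ := fun a =>
    (∑ k ∈ Tᶜ, G a.val k * x k) - Aᴴ.mulVec (A.mulVec x - y) a.val with hv
  have key : GTT.mulVec (GTT⁻¹.mulVec v) = v := by
    rw [mulVec_mulVec, Matrix.mul_nonsing_inv _ hinv, one_mulVec]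
  have hGx : ∀ w, Aᴴ.mulVec (A.mulVec w - y) = G.mulVec w - Aᴴ.mulVec y := by
    intro w
    rw [mulVec_sub, hG, ← mulVec_mulVec]
  rw [hGx]
  have hsum : G.mulVec (x + d) j = ∑ k ∈ T, G j k * (x k + d k) := by
    simp only [mulVec, dotProduct, Pi.add_apply]
    refine (Finset.sum_subset T.subset_univ ?_).symm
    intro k _ hk
    rw [hzero k hk, mul_zero]
  have hd : ∑ k ∈ T, G j k * d k = v ⟨j, hj⟩ := by
    have : ∑ k ∈ T, G j k * d k
        = ∑ a ∈ T.attach, GTT ⟨j, hj⟩ a * (GTT⁻¹.mulVec v) a := by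
      rw [← Finset.sum_attach T fun k => G j k * d k]
      refine Finset.sum_congr rfl fun a _ => ?_
      rw [hdT a.val a.property, hGTT]
      rfl
    rw [this]
    have := congrFun key ⟨j, hj⟩
    simpa [mulVec, dotProduct, Finset.sum_attach] using this
  have hsplit : ∑ k ∈ T, G j k * x k + ∑ k ∈ Tᶜ, G j k * x k = G.mulVec x j := by
    rw [Finset.sum_add_sum_compl]
    simp [mulVec, dotProduct]
  have hvj : v ⟨j, hj⟩ = ∑ k ∈ Tᶜ, G j k * x k - (G.mulVec x j - Aᴴ.mulVec y j) := by
    rw [hv]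
    simp only
    rw [hGx x]
    rfl
  simp only [Pi.sub_apply]
  rw [hsum]
  simp only [mul_add]
  rw [Finset.sum_add_distrib, hd, hvj]
  rw [← hsplit]
  ring
end
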